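/- arXiv:1009.2414 — 2 statements merged into one kernel-verified Lean document; each statement's English description precedes it below -/
import Mathlib

section
/- Let D be a complete Kobayashi hyperbolic domain, D_∞ another complete hyperbolic domain, and suppose f̃ : D → closure(D_∞) is continuous with f̃ distance-preserving on Ω = {z ∈ D : f̃(z) ∈ D_∞} (i.e., d_D(x,y) = d_{D_∞}(f̃(x), f̃(y)) for x, y ∈ Ω), and Ω is nonempty. Then Ω = D; equivalently, f̃(D) ⊆ D_∞. -/
open Filter

/-- Abstract form of Step V: let `X` be a connected metric space (the source
domain with its Kobayashi distance), `M` an ambient metric space containing an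
open set `Y` (the target domain), and `f̃ : X → M` a continuous map with values
in the closure of `Y`.  Suppose the distance `dY` of `Y` blows up at the
boundary (for any base point of `Y`, `dY`-distances to points converging to a
frontier point of `Y` tend to `∞`), and `f̃` is distance-preserving on
`Ω = f̃⁻¹(Y)` (comparing `dist` on `X` with `dY`).  If `Ω` is nonempty, then
`Ω = X`, i.e. `f̃(X) ⊆ Y`. -/
theorem stmt_14 {X M : Type*} [MetricSpace X] [ConnectedSpace X]
    [MetricSpace M] (Y : Set M) (hY : IsOpen Y)
    (ftilde : X → M) (hcont : Continuous ftilde)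
    (hclos : ∀ x, ftilde x ∈ closure Y)
    (dY : M → M → ℝ)
    (hblow : ∀ y₀ ∈ Y, ∀ (u : ℕ → M), (∀ n, u n ∈ Y) →
      ∀ p ∈ frontier Y, Tendsto u atTop (nhds p) →
        Tendsto (fun n => dY (u n) y₀) atTop atTop)
    (hiso : ∀ x x' : X, ftilde x ∈ Y → ftilde x' ∈ Y →
      dY (ftilde x) (ftilde x') = dist x x')
    (hne : ∃ x₀, ftilde x₀ ∈ Y) :
    ∀ x, ftilde x ∈ Y := by
  obtain ⟨x₀, hx₀⟩ := hne
  set Ω : Set X := ftilde ⁻¹' Y with hΩ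
  have hopen : IsOpen Ω := hY.preimage hcont
  have hclosed : IsClosed Ω := by
    rw [← closure_subset_iff_isClosed]
    intro x hxcl
    by_contra hxY
    obtain ⟨u, hu, hulim⟩ := mem_closure_iff_seq_limit.1 hxcl
    have hfront : ftilde x ∈ frontier Y := by
      rw [hY.frontier_eq]
      exact ⟨hclos x, hxY⟩
    have hflim : Tendsto (fun n => ftilde (u n)) atTop (nhds (ftilde x)) :=
      (hcont.continuousAt.tendsto).comp hulim
    have hblow' := hblow (ftilde x₀) hx₀ (fun n => ftilde (u n)) (fun n => hu n)
      (ftilde x) hfront hflim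
    have heq : ∀ n, dY (ftilde (u n)) (ftilde x₀) = dist (u n) x₀ :=
      fun n => hiso (u n) x₀ (hu n) hx₀
    have hdlim : Tendsto (fun n => dY (ftilde (u n)) (ftilde x₀)) atTop
        (nhds (dist x x₀)) := by
      simp only [heq]
      exact hulim.dist (tendsto_const_nhds : Tendsto (fun _ : ℕ => x₀) atTop (nhds x₀))
    exact not_tendsto_atTop_of_tendsto_nhds hdlim hblow'
  have : Ω = Set.univ :=
    (isClopen_iff.1 ⟨hclosed, hopen⟩).resolve_left
      (Set.nonempty_iff_ne_empty.1 ⟨x₀, hx₀⟩)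
  intro x
  have : x ∈ Ω := this ▸ Set.mem_univ x
  exact this
end

section
/- Suppose f : D₁ → D₂ preserves a distance d (d_{D₂}(f(x), f(y)) = d_{D₁}(x, y)) and the following estimates hold for sequences p^j, t^j ∈ D₁ with a_j = dist(p^j, ∂D₁) → 0, b_j = dist(t^j, ∂D₁) → 0, |p^j − t^j| → 0: (Upper) d_{D₁}(p^j, t^j) ≤ −(1/2)log a_j + (1/2)log(a_j + |p^j−t^j|) + (1/2)log(b_j + |p^j−t^j|) − (1/2)log b_j + C₁; (Lower) d_{D₂}(f(p^j), f(t^j)) ≥ −(1/2)log dist(f(p^j), ∂D₂) − (1/2)log dist(f(t^j), ∂D₂) − C₂; (Comparison) dist(f(p^j), ∂D₂) ≤ C₃·a_j and dist(f(t^j), ∂D₂) ≤ C₃·b_j. Then one reaches a contradiction: no such sequences can exist. -/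
open Metric Filter Topology

/-! Along the sequences, the isometry turns the lower estimate for `d_{D₂}` into a lower bound
for `d_{D₁}`, and the comparison `dist(f(·), ∂D₂) ≤ C₃ · dist(·, ∂D₁)` makes its singular terms
`-½ log a_j - ½ log b_j` match those of the upper estimate up to `log C₃`. They cancel, leaving
`-(C₁ + C₂ + log C₃) ≤ ½ log (a_j + c_j) + ½ log (b_j + c_j)` with `c_j = |p^j - t^j|`,
whose right side tends to `-∞`. -/

lemma neg_le_half_log_add_half_log_of_estimates {d a b c x y C₁ C₂ C₃ : ℝ}
    (ha : 0 < a) (hb : 0 < b) (hx : 0 < x) (hy : 0 < y) (hC₃ : 0 < C₃)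
    (hupper : d ≤ -(1/2) * Real.log a + (1/2) * Real.log (a + c)
      + (1/2) * Real.log (b + c) - (1/2) * Real.log b + C₁)
    (hlower : -(1/2) * Real.log x - (1/2) * Real.log y - C₂ ≤ d)
    (hxa : x ≤ C₃ * a) (hyb : y ≤ C₃ * b) :
    -(C₁ + C₂ + Real.log C₃) ≤ (1/2) * Real.log (a + c) + (1/2) * Real.log (b + c) := by
  have hlog_x : Real.log x ≤ Real.log C₃ + Real.log a := by
    rw [← Real.log_mul hC₃.ne' ha.ne']
    exact Real.log_le_log hx hxa
  have hlog_y : Real.log y ≤ Real.log C₃ + Real.log b := by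
    rw [← Real.log_mul hC₃.ne' hb.ne']
    exact Real.log_le_log hy hyb
  linarith

lemma tendsto_log_add_atBot {α : Type*} {l : Filter α} {u v : α → ℝ}
    (hu : Tendsto u l (𝓝 0)) (hv : Tendsto v l (𝓝 0)) (hu_pos : ∀ i, 0 < u i)
    (hv_nonneg : ∀ i, 0 ≤ v i) :
    Tendsto (fun i => Real.log (u i + v i)) l atBot :=
  Real.tendsto_log_nhdsGT_zero.comp <| tendsto_nhdsWithin_iff.2
    ⟨by simpa using hu.add hv, .of_forall fun i => add_pos_of_pos_of_nonneg (hu_pos i) (hv_nonneg i)⟩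

theorem stmt_19_general {n : ℕ} (D₁ D₂ : Set (EuclideanSpace ℂ (Fin n)))
    (dD₁ dD₂ : EuclideanSpace ℂ (Fin n) → EuclideanSpace ℂ (Fin n) → ℝ)
    (f : EuclideanSpace ℂ (Fin n) → EuclideanSpace ℂ (Fin n))
    (hiso : ∀ x ∈ D₁, ∀ y ∈ D₁, dD₂ (f x) (f y) = dD₁ x y)
    (p t : ℕ → EuclideanSpace ℂ (Fin n))
    (hpD : ∀ j, p j ∈ D₁) (htD : ∀ j, t j ∈ D₁)
    (a b : ℕ → ℝ)
    (hapos : ∀ j, 0 < a j) (hbpos : ∀ j, 0 < b j)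
    (ha0 : Tendsto a atTop (nhds 0)) (hb0 : Tendsto b atTop (nhds 0))
    (hc0 : Tendsto (fun j => dist (p j) (t j)) atTop (nhds 0))
    (hfp : ∀ j, 0 < infDist (f (p j)) (frontier D₂))
    (hft : ∀ j, 0 < infDist (f (t j)) (frontier D₂))
    (C₁ C₂ C₃ : ℝ) (hC₃ : 0 < C₃)
    (hupper : ∀ j, dD₁ (p j) (t j) ≤
      -(1/2) * Real.log (a j) + (1/2) * Real.log (a j + dist (p j) (t j))
      + (1/2) * Real.log (b j + dist (p j) (t j)) - (1/2) * Real.log (b j) + C₁)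
    (hlower : ∀ j, dD₂ (f (p j)) (f (t j)) ≥
      -(1/2) * Real.log (infDist (f (p j)) (frontier D₂))
      - (1/2) * Real.log (infDist (f (t j)) (frontier D₂)) - C₂)
    (hcomp₁ : ∀ j, infDist (f (p j)) (frontier D₂) ≤ C₃ * a j)
    (hcomp₂ : ∀ j, infDist (f (t j)) (frontier D₂) ≤ C₃ * b j) :
    False := by
  have hbound : ∀ j, -(C₁ + C₂ + Real.log C₃) ≤ (1/2) * Real.log (a j + dist (p j) (t j))
      + (1/2) * Real.log (b j + dist (p j) (t j)) := fun j =>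
    neg_le_half_log_add_half_log_of_estimates (hapos j) (hbpos j) (hfp j) (hft j) hC₃ (hupper j)
      (hiso _ (hpD j) _ (htD j) ▸ hlower j) (hcomp₁ j) (hcomp₂ j)
  have hlog_p := tendsto_log_add_atBot ha0 hc0 hapos fun _ => dist_nonneg
  have hlog_t := tendsto_log_add_atBot hb0 hc0 hbpos fun _ => dist_nonneg
  obtain ⟨j, hj⟩ := ((hlog_p.const_mul_atBot one_half_pos).atBot_add_atBot
    (hlog_t.const_mul_atBot one_half_pos)).eventually_lt_atBot (-(C₁ + C₂ + Real.log C₃)) |>.exists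
  exact (hbound j).not_gt hj

/-- The full contradiction argument of Theorem 1: a distance-preserving map
`f : D₁ → D₂` cannot satisfy simultaneously the upper estimate on `d_{D₁}`, the
lower estimate on `d_{D₂}` and the boundary-distance comparison along sequences
`p^j, t^j` approaching `∂D₁` with `|p^j − t^j| → 0`. -/
theorem stmt_19 {n : ℕ} (D₁ D₂ : Set (EuclideanSpace ℂ (Fin n)))
    (dD₁ dD₂ : EuclideanSpace ℂ (Fin n) → EuclideanSpace ℂ (Fin n) → ℝ)
    (f : EuclideanSpace ℂ (Fin n) → EuclideanSpace ℂ (Fin n))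
    (hiso : ∀ x ∈ D₁, ∀ y ∈ D₁, dD₂ (f x) (f y) = dD₁ x y)
    (p t : ℕ → EuclideanSpace ℂ (Fin n))
    (hpD : ∀ j, p j ∈ D₁) (htD : ∀ j, t j ∈ D₁)
    (a b : ℕ → ℝ)
    (hadef : ∀ j, a j = infDist (p j) (frontier D₁))
    (hbdef : ∀ j, b j = infDist (t j) (frontier D₁))
    (hapos : ∀ j, 0 < a j) (hbpos : ∀ j, 0 < b j)
    (ha0 : Tendsto a atTop (nhds 0)) (hb0 : Tendsto b atTop (nhds 0))
    (hc0 : Tendsto (fun j => dist (p j) (t j)) atTop (nhds 0))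
    (hfp : ∀ j, 0 < infDist (f (p j)) (frontier D₂))
    (hft : ∀ j, 0 < infDist (f (t j)) (frontier D₂))
    (C₁ C₂ C₃ : ℝ) (hC₃ : 0 < C₃)
    (hupper : ∀ j, dD₁ (p j) (t j) ≤
      -(1/2) * Real.log (a j) + (1/2) * Real.log (a j + dist (p j) (t j))
      + (1/2) * Real.log (b j + dist (p j) (t j)) - (1/2) * Real.log (b j) + C₁)
    (hlower : ∀ j, dD₂ (f (p j)) (f (t j)) ≥
      -(1/2) * Real.log (infDist (f (p j)) (frontier D₂))
      - (1/2) * Real.log (infDist (f (t j)) (frontier D₂)) - C₂)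
    (hcomp₁ : ∀ j, infDist (f (p j)) (frontier D₂) ≤ C₃ * a j)
    (hcomp₂ : ∀ j, infDist (f (t j)) (frontier D₂) ≤ C₃ * b j) :
    False :=
  stmt_19_general D₁ D₂ dD₁ dD₂ f hiso p t hpD htD a b hapos hbpos ha0 hb0 hc0 hfp hft C₁ C₂ C₃ hC₃
    hupper hlower hcomp₁ hcomp₂
end
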